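/- arXiv:1305.4423 — 7 statements merged into one kernel-verified Lean document; each statement's English description precedes it below -/
import Mathlib

section
/- Every division subring of a centrally finite division ring is itself centrally finite; that is, if D is a division ring that is finite-dimensional over its center, then any division subring K of D is finite-dimensional over its own center Z(K). -/
/-!
Let `Z` be the center of `K` and `C` the centralizer of `K` in `D`. A family in `C` that is
linearly independent over `Z` stays independent over `K`: in a shortest `K`-relation normalised to
have a coefficient `1`, commutators with elements of `K` give shorter relations, so all
coefficients lie in `Z`. Writing arbitrary coefficients from `C` in a `Z`-basis of their span, the
tower law for linear independence then shows that a `Z`-basis of `K` stays independent over `C`,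
hence over `Z(D) ⊆ C`. Since `D` is finite-dimensional over `Z(D)`, that basis is finite.
-/

theorem LinearIndependent.of_subring_le {R M ι : Type*} [Ring R] [AddCommGroup M] [Module R M]
    {S T : Subring R} (hST : S ≤ T) {v : ι → M} (hv : LinearIndependent T v) :
    LinearIndependent S v :=
  hv.map_of_injective_injectiveₛ (Subring.inclusion hST) (AddMonoidHom.id M)
    (Subring.inclusion_injective hST) Function.injective_id fun _ _ => rfl

namespace Subfield

variable {D : Type*} [DivisionRing D]

instance moduleCenter (K : Subfield D) : Module (Subring.center K) D :=
  Module.compHom D (K.subtype.comp (Subring.center K).subtype)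

theorem center_smul_def {K : Subfield D} (z : Subring.center K) (d : D) : z • d = (z : D) * d :=
  rfl

instance (K : Subfield D) : IsScalarTower (Subring.center K) K D :=
  ⟨fun z k d => mul_assoc (z : D) k d⟩

end Subfield

section

variable {D : Type*} [DivisionRing D] {K : Subfield D} {ι : Type*}

theorem sum_commutator_smul_eq_zero_of_mem_centralizer {e : ι → D}
    (he : ∀ i, e i ∈ Subring.centralizer (K : Set D)) {s : Finset ι} {g : ι → K}
    (hg : ∑ i ∈ s, g i • e i = 0) (x : K) : ∑ i ∈ s, (x * g i - g i * x) • e i = 0 :=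
  calc ∑ i ∈ s, (x * g i - g i * x) • e i
      = x • ∑ i ∈ s, g i • e i - (∑ i ∈ s, g i • e i) * x := by
        simp only [Finset.smul_sum, Finset.sum_mul, ← Finset.sum_sub_distrib, Subfield.smul_def,
          smul_eq_mul, Subfield.coe_sub, Subfield.coe_mul, sub_mul, mul_assoc, he _ x x.2]
    _ = 0 := by rw [hg, smul_zero, zero_mul, sub_zero]

theorem LinearIndependent.of_center_of_mem_centralizer {e : ι → D}
    (he : ∀ i, e i ∈ Subring.centralizer (K : Set D))
    (hZ : LinearIndependent (Subring.center K) e) : LinearIndependent K e := by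
  classical
  rw [linearIndependent_iff'] at hZ ⊢
  intro s
  induction s using Finset.strongInduction with
  | H s ih =>
  intro g hg
  by_contra! ⟨j, hj, hgj⟩
  set g' : ι → K := fun i => (g j)⁻¹ * g i
  have hg'j : g' j = 1 := inv_mul_cancel₀ hgj
  have hg' : ∑ i ∈ s, g' i • e i = 0 := by
    simp only [g', mul_smul, ← Finset.smul_sum, hg, smul_zero]
  have hcomm : ∀ i ∈ s, ∀ x : K, x * g' i = g' i * x := by
    intro i hi x
    have hshorter : ∑ i ∈ s.erase j, (x * g' i - g' i * x) • e i = 0 := by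
      rw [Finset.sum_erase _ (by simp [hg'j])]
      exact sum_commutator_smul_eq_zero_of_mem_centralizer he hg' x
    obtain rfl | hij := eq_or_ne i j
    · rw [hg'j, mul_one, one_mul]
    · exact sub_eq_zero.mp <|
        ih _ (Finset.erase_ssubset hj) _ hshorter i (Finset.mem_erase.mpr ⟨hij, hi⟩)
  let z : ι → Subring.center K := fun i =>
    if h : i ∈ s then ⟨g' i, Subring.mem_center_iff.mpr (hcomm i h)⟩ else 0
  have hz : ∑ i ∈ s, z i • e i = 0 := by
    rw [← hg']
    exact Finset.sum_congr rfl fun i hi => by simp only [z, dif_pos hi]; rfl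
  have := congrArg Subtype.val (hZ s z hz j hj)
  simp only [z, dif_pos hj, hg'j, ZeroMemClass.coe_zero] at this
  exact one_ne_zero this

theorem LinearIndependent.centralizer_of_center {v : ι → K}
    (hv : LinearIndependent (Subring.center K) v) :
    LinearIndependent (Subring.centralizer (K : Set D)) (fun i => (v i : D)) := by
  rw [linearIndependent_iff']
  intro s c hc
  obtain ⟨b, hbc, hspan, hb⟩ :=
    exists_linearIndependent (Subring.center K) ((fun i => (c i : D)) '' s)
  have : Fintype b := ((s.finite_toSet.image _).subset hbc).fintype
  have hbC : ∀ x : b, (x : D) ∈ Subring.centralizer (K : Set D) := fun x => by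
    obtain ⟨i, -, hi⟩ := hbc x.2
    exact hi ▸ (c i).2
  have hvb := linearIndependent_smul hv (hb.of_center_of_mem_centralizer hbC)
  have hcoord : ∀ i ∈ s, ∃ g : b → Subring.center K, ∑ x, g x • (x : D) = c i :=
    fun i hi => Submodule.mem_span_range_iff_exists_fun _ |>.mp <| by
      rw [Subtype.range_coe, hspan]
      exact Submodule.subset_span ⟨i, hi, rfl⟩
  choose! g hg using hcoord
  -- each `x ∈ b` commutes with `v i`, so the relation becomes one among the products `v i • x`
  have hsum : ∑ p ∈ s ×ˢ Finset.univ, g p.1 p.2 • (v p.1 • (p.2 : D)) = 0 := by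
    rw [Finset.sum_product, ← hc]
    refine Finset.sum_congr rfl fun i hi => ?_
    rw [Subring.smul_def, ← hg i hi, smul_eq_mul, Finset.sum_mul]
    refine Finset.sum_congr rfl fun x _ => ?_
    simp only [Subfield.center_smul_def, Subfield.smul_def, smul_eq_mul, mul_assoc,
      hbC x _ (v i).2]
  intro i hi
  have hg0 : ∀ x, g i x = 0 := fun x => linearIndependent_iff'.mp hvb _ _ hsum (i, x)
    (Finset.mem_product.mpr ⟨hi, Finset.mem_univ x⟩)
  apply Subtype.ext
  rw [← hg i hi]
  simp only [hg0, ZeroMemClass.coe_zero]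
  exact Finset.sum_eq_zero fun x _ => zero_smul _ _

end

/-- If a division ring `D` is finite-dimensional over its center (centrally finite),
then every division subring `K` of `D` is finite-dimensional over its own center. -/
theorem stmt_0 (D : Type*) [DivisionRing D]
    (hD : Module.Finite (Subring.center D) D) (K : Subfield D) :
    Module.Finite (Subring.center K) K := by
  let b := Module.Basis.ofVectorSpace (Subring.center K) K
  have hb : LinearIndependent (Subring.center D) (fun i => (b i : D)) :=
    b.linearIndependent.centralizer_of_center.of_subring_le (Subring.center_le_centralizer _)
  have : Finite (Module.Basis.ofVectorSpaceIndex (Subring.center K) K) :=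
    hb.finite_of_isNoetherian
  exact Module.Finite.of_basis b
end

section
/- Let p₁ < p₂ < ... be an infinite sequence of distinct primes and K = ℚ(√p₁, √p₂, ...) ⊆ ℝ. If x ∈ K satisfies fᵢ(x) = x for every i, where fᵢ is the ℚ-automorphism of K sending √pᵢ to −√pᵢ and fixing √pⱼ for all j ≠ i, then x ∈ ℚ. -/
/-!
An element `x` of `K` lies in `F_s = ℚ(√pᵢ : i ∈ s)` for some finite `s`; induct on `s`.
Adjoin `r = √pₐ` with `a ∉ s`: if `r ∈ F_s` nothing changes, and otherwise, since `r² ∈ ℚ`,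
every element of `F_s(r)` is `u + v r` with `u, v ∈ F_s`. The automorphism `fₐ` fixes `F_s`
pointwise and negates `r`, so `u + v r` is `fₐ`-fixed only if `v = 0`.
-/

open Set

namespace Subfield

variable {E : Type*} [Field E]

theorem exists_finset_mem_closure_image {ι : Type*} (t : ι → E) {x : E}
    (hx : x ∈ closure (range t)) : ∃ s : Finset ι, x ∈ closure (t '' s) := by
  classical
  have hdir : Directed (· ≤ ·) fun s : Finset ι => closure (t '' s) := fun s s' =>
    ⟨s ∪ s', closure_mono (image_mono (by simp)), closure_mono (image_mono (by simp))⟩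
  refine (mem_iSup_of_directed hdir).1 ?_
  rw [← closure_iUnion]
  refine closure_mono ?_ hx
  rintro _ ⟨i, rfl⟩
  exact mem_iUnion.2 ⟨{i}, by simp⟩

theorem sq_sub_sq_mul_sq_ne_zero {F : Subfield E} {r : E} (hrF : r ∉ F) {u v : E} (hu : u ∈ F)
    (hv : v ∈ F) (huv : u + v * r ≠ 0) : u ^ 2 - v ^ 2 * r ^ 2 ≠ 0 := by
  intro h
  rcases eq_or_ne v 0 with rfl | hv0
  · simp_all
  · have : (u / v) ^ 2 = r ^ 2 := by
      field_simp
      linear_combination h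
    rcases sq_eq_sq_iff_eq_or_eq_neg.1 this with h' | h'
    · exact hrF (h' ▸ div_mem hu hv)
    · exact hrF (by rw [← neg_neg r, ← h']; exact neg_mem (div_mem hu hv))

/-- The subfield `F + F r`; it is closed under inverses because
`(u + v r)⁻¹ = (u - v r) / (u² - v² r²)`. -/
def adjoinSqrt (F : Subfield E) (r : E) (hr : r ^ 2 ∈ F) (hrF : r ∉ F) : Subfield E where
  carrier := {y | ∃ u ∈ F, ∃ v ∈ F, y = u + v * r}
  zero_mem' := ⟨0, zero_mem F, 0, zero_mem F, by ring⟩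
  one_mem' := ⟨1, one_mem F, 0, zero_mem F, by ring⟩
  add_mem' := by
    rintro _ _ ⟨u, hu, v, hv, rfl⟩ ⟨u', hu', v', hv', rfl⟩
    exact ⟨u + u', add_mem hu hu', v + v', add_mem hv hv', by ring⟩
  neg_mem' := by
    rintro _ ⟨u, hu, v, hv, rfl⟩
    exact ⟨-u, neg_mem hu, -v, neg_mem hv, by ring⟩
  mul_mem' := by
    rintro _ _ ⟨u, hu, v, hv, rfl⟩ ⟨u', hu', v', hv', rfl⟩
    exact ⟨u * u' + v * v' * r ^ 2, add_mem (mul_mem hu hu') (mul_mem (mul_mem hv hv') hr),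
      u * v' + v * u', add_mem (mul_mem hu hv') (mul_mem hv hu'), by ring⟩
  inv_mem' := by
    rintro _ ⟨u, hu, v, hv, rfl⟩
    rcases eq_or_ne (u + v * r) 0 with h0 | h0
    · exact ⟨0, zero_mem F, 0, zero_mem F, by simp [h0]⟩
    have hN := sq_sub_sq_mul_sq_ne_zero hrF hu hv h0
    have hNF : u ^ 2 - v ^ 2 * r ^ 2 ∈ F := sub_mem (pow_mem hu 2) (mul_mem (pow_mem hv 2) hr)
    refine ⟨u / (u ^ 2 - v ^ 2 * r ^ 2), div_mem hu hNF,
      -v / (u ^ 2 - v ^ 2 * r ^ 2), div_mem (neg_mem hv) hNF, ?_⟩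
    field_simp
    ring

theorem closure_insert_le_adjoinSqrt {F : Subfield E} {r : E} (hr : r ^ 2 ∈ F) (hrF : r ∉ F) :
    closure (insert r (F : Set E)) ≤ adjoinSqrt F r hr hrF := by
  refine closure_le.2 (insert_subset ⟨0, zero_mem F, 1, one_mem F, by ring⟩ ?_)
  exact fun u hu => ⟨u, hu, 0, zero_mem F, by ring⟩

theorem mem_of_mem_closure_insert_of_map_eq_self (h2 : (2 : E) ≠ 0) (σ : E →+* E)
    {F : Subfield E} (hσF : ∀ u ∈ F, σ u = u) {r : E} (hr : r ^ 2 ∈ F) (hσr : σ r = -r)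
    {y : E} (hy : y ∈ closure (insert r (F : Set E))) (hσy : σ y = y) : y ∈ F := by
  by_cases hrF : r ∈ F
  · exact closure_le.2 (insert_subset hrF subset_rfl) hy
  obtain ⟨u, hu, v, hv, rfl⟩ := closure_insert_le_adjoinSqrt hr hrF hy
  have hr0 : r ≠ 0 := fun h => hrF (h ▸ zero_mem F)
  have hv0 : v = 0 := by
    rw [map_add, map_mul, hσF u hu, hσF v hv, hσr] at hσy
    have : 2 * v * r = 0 := by linear_combination -hσy
    simpa [h2, hr0] using this
  simpa [hv0] using hu

theorem mem_bot_of_forall_map_eq_self {ι : Type*} [DecidableEq ι] (h2 : (2 : E) ≠ 0) (t : ι → E)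
    (ht : ∀ i, t i ^ 2 ∈ (⊥ : Subfield E)) (σ : ι → E →+* E)
    (hσ : ∀ i j, σ i (t j) = if j = i then -t j else t j) {x : E} (hx : x ∈ closure (range t))
    (hσx : ∀ i, σ i x = x) : x ∈ (⊥ : Subfield E) := by
  obtain ⟨s, hs⟩ := exists_finset_mem_closure_image t hx
  clear hx
  induction s using Finset.induction_on generalizing x with
  | empty => simpa using hs
  | insert a s has ih =>
    have hσF : ∀ u ∈ closure (t '' s), σ a u = u := by
      refine fun u hu => RingHom.eqOn_field_closure (g := RingHom.id E) ?_ hu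
      rintro _ ⟨j, hj, rfl⟩
      simpa [show j ≠ a by rintro rfl; exact has hj] using hσ a j
    refine ih hσx (mem_of_mem_closure_insert_of_map_eq_self h2 (σ a) hσF
      ((bot_le : ⊥ ≤ closure (t '' s)) (ht a)) (by simpa using hσ a a) ?_ (hσx a))
    rw [Finset.coe_insert, image_insert_eq] at hs
    exact closure_mono (insert_subset_insert subset_closure) hs

end Subfield

theorem stmt_2_general (p : ℕ → ℕ)
    (K : Subfield ℝ) (hK : K = Subfield.closure (Set.range fun i => Real.sqrt (p i)))
    (hmem : ∀ i, Real.sqrt (p i) ∈ K)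
    (f : ℕ → (K ≃+* K))
    (hf : ∀ i j, ((f i ⟨Real.sqrt (p j), hmem j⟩ : K) : ℝ) =
      if j = i then -Real.sqrt (p j) else Real.sqrt (p j))
    (x : K) (hx : ∀ i, f i x = x) :
    ∃ q : ℚ, (x : ℝ) = q := by
  set t : ℕ → K := fun i => ⟨Real.sqrt (p i), hmem i⟩
  have ht : ∀ i, t i ^ 2 ∈ (⊥ : Subfield K) := fun i => by
    have : t i ^ 2 = (p i : K) := Subtype.ext (by simp [t])
    exact this ▸ natCast_mem _ _
  have hσ : ∀ i j, (f i : K →+* K) (t j) = if j = i then -t j else t j := fun i j => by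
    have := hf i j
    split_ifs at this ⊢ <;> exact Subtype.ext this
  have hxt : x ∈ Subfield.closure (range t) := by
    have : (x : ℝ) ∈ (Subfield.closure (range t)).map K.subtype := by
      rw [RingHom.map_field_closure, ← range_comp]
      exact hK ▸ x.2
    obtain ⟨y, hy, hyx⟩ := this
    rwa [← Subtype.ext hyx]
  have hx_bot := Subfield.mem_bot_of_forall_map_eq_self two_ne_zero t ht (fun i => f i) hσ hxt hx
  rw [Subfield.bot_eq_of_charZero] at hx_bot
  obtain ⟨q, hq⟩ := hx_bot
  exact ⟨q, by simp [← hq]⟩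

/-- If `x ∈ K = ℚ(√p₁, √p₂, …)` is fixed by every automorphism `fᵢ`
(where `fᵢ(√pᵢ) = -√pᵢ` and `fᵢ(√pⱼ) = √pⱼ` for `j ≠ i`), then `x ∈ ℚ`. -/
theorem stmt_2 (p : ℕ → ℕ) (hp : ∀ i, (p i).Prime) (hmono : StrictMono p)
    (K : Subfield ℝ) (hK : K = Subfield.closure (Set.range fun i => Real.sqrt (p i)))
    (hmem : ∀ i, Real.sqrt (p i) ∈ K)
    (f : ℕ → (K ≃+* K))
    (hf : ∀ i j, ((f i ⟨Real.sqrt (p j), hmem j⟩ : K) : ℝ) =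
      if j = i then -Real.sqrt (p j) else Real.sqrt (p j))
    (x : K) (hx : ∀ i, f i x = x) :
    ∃ q : ℚ, (x : ℝ) = q :=
  stmt_2_general p K hK hmem f hf x hx
end

section
/- If D is a weakly locally finite division ring with center F, then the center of the derived group D' = [D*, D*] is a torsion group; equivalently, every element of D' ∩ F has finite multiplicative order. -/
/-- A division ring is weakly locally finite if every finite subset generates a
division subring which is finite-dimensional over its own center. -/
def IsWeaklyLocallyFinite (D : Type*) [DivisionRing D] : Prop :=
  ∀ S : Finset D,
    Module.Finite (Subring.center (Subfield.closure (S : Set D)))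
      (Subfield.closure (S : Set D))

/-!
In a division ring `L` of dimension `n` over its center `K`, the norm `N_{L/K}` is a
homomorphism to the commutative group `Kˣ`, so it is `1` on commutators, while a central `z`
has norm `z ^ n`. Hence central elements of `L'` are `n`-th roots of unity. An element
`x ∈ D' ∩ F` already lies in `L'` for the division subring `L` generated by the finitely many
entries of the commutators it is built from; `L` is centrally finite and `x` is central in `L`.
-/

open Subgroup

theorem exists_finset_mem_commutator_closure {G : Type*} [Group G] {x : G}
    (hx : x ∈ commutator G) :
    ∃ s : Finset G, x ∈ ⁅closure (s : Set G), closure (s : Set G)⁆ := by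
  classical
  rw [commutator_eq_closure] at hx
  induction hx using closure_induction with
  | mem _ hg =>
    obtain ⟨a, b, rfl⟩ := hg
    exact ⟨{a, b}, commutator_mem_commutator (subset_closure (by simp))
      (subset_closure (by simp))⟩
  | one => exact ⟨∅, one_mem _⟩
  | mul _ _ _ _ hx hy =>
    obtain ⟨s, hs⟩ := hx
    obtain ⟨t, ht⟩ := hy
    have mono : ∀ u ⊆ s ∪ t, ⁅closure (u : Set G), closure (u : Set G)⁆ ≤
        ⁅closure ((s ∪ t : Finset G) : Set G), closure ((s ∪ t : Finset G) : Set G)⁆ :=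
      fun u hu => commutator_mono (closure_mono (Finset.coe_subset.mpr hu))
        (closure_mono (Finset.coe_subset.mpr hu))
    exact ⟨s ∪ t, mul_mem (mono s Finset.subset_union_left hs)
      (mono t Finset.subset_union_right ht)⟩
  | inv _ _ hx =>
    obtain ⟨s, hs⟩ := hx
    exact ⟨s, inv_mem hs⟩

theorem pow_finrank_center_eq_one_of_mem_commutator {L : Type*} [DivisionRing L] {y : Lˣ}
    (hy : y ∈ commutator Lˣ) (hyc : (y : L) ∈ Subring.center L) :
    y ^ Module.finrank (Subring.center L) L = 1 := by
  set K := Subring.center L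
  have hnorm : Algebra.norm K (y : L) = 1 := by
    have := Abelianization.commutator_subset_ker (Units.map (Algebra.norm K : L →* K)) hy
    simpa [Units.ext_iff] using this
  have hpow : Algebra.norm K (y : L) = ⟨y, hyc⟩ ^ Module.finrank K L :=
    Algebra.norm_algebraMap (⟨y, hyc⟩ : K)
  ext
  simpa using congrArg Subtype.val (hpow.symm.trans hnorm)

theorem exists_pow_eq_one_of_mem_commutator {L : Type*} [DivisionRing L]
    [Module.Finite (Subring.center L) L] {y : Lˣ} (hy : y ∈ commutator Lˣ)
    (hyc : (y : L) ∈ Subring.center L) : ∃ n : ℕ, 0 < n ∧ y ^ n = 1 :=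
  ⟨_, Module.finrank_pos, pow_finrank_center_eq_one_of_mem_commutator hy hyc⟩

theorem exists_finset_mem_map_commutator_units_closure {D : Type*} [DivisionRing D] {x : Dˣ}
    (hx : x ∈ commutator Dˣ) :
    ∃ S : Finset D, x ∈ (commutator (Subfield.closure (S : Set D))ˣ).map
      (Units.map (Subfield.closure (S : Set D)).subtype.toMonoidHom) := by
  classical
  obtain ⟨s, hs⟩ := exists_finset_mem_commutator_closure hx
  set L := Subfield.closure ((s.image (↑) : Finset D) : Set D)
  let f : Lˣ →* Dˣ := Units.map L.subtype.toMonoidHom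
  have hsf : closure (s : Set Dˣ) ≤ (⊤ : Subgroup Lˣ).map f := by
    rw [← MonoidHom.range_eq_map, closure_le]
    intro u hu
    have huL : (u : D) ∈ L := Subfield.subset_closure (by simpa using ⟨u, hu, rfl⟩)
    exact ⟨Units.mk0 ⟨u, huL⟩ fun h => u.ne_zero (congrArg Subtype.val h), Units.ext rfl⟩
  exact ⟨_, commutator_def Lˣ ▸ commutator_le_map_commutator hsf hsf hs⟩

/-- If `D` is a weakly locally finite division ring with center `F`, then the center
of the derived group `D' = [D*, D*]` is torsion: every element of `D' ∩ F`
has finite multiplicative order. -/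
theorem stmt_6 (D : Type*) [DivisionRing D] (hD : IsWeaklyLocallyFinite D) :
    ∀ x : Dˣ, x ∈ commutator Dˣ → (x : D) ∈ Subring.center D →
      ∃ n : ℕ, 0 < n ∧ x ^ n = 1 := by
  intro x hx hxc
  obtain ⟨S, y, hy, rfl⟩ := exists_finset_mem_map_commutator_units_closure hx
  have := hD S
  have hyc : (y : Subfield.closure (S : Set D)) ∈ Subring.center _ :=
    Subring.mem_center_iff.mpr fun g => Subtype.ext (Subring.mem_center_iff.mp hxc g)
  obtain ⟨n, hn, hyn⟩ := exists_pow_eq_one_of_mem_commutator hy hyc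
  exact ⟨n, hn, by rw [← map_pow, hyn, map_one]⟩
end

section
/- Let L be a division ring with center Z(L) and [L : Z(L)] = n < ∞. If x ∈ Z(L) can be written as a product of multiplicative commutators in L*, then xⁿ = 1. -/
/-!
The norm `N : L → Z(L)` is multiplicative with values in a commutative ring, so on units it
factors through the abelianization and kills every product of commutators; on the other hand
`N z = z ^ [L : Z(L)]` for central `z`.
-/

namespace Algebra

variable {R S : Type*} [CommRing R] [Ring S] [Algebra R S]

theorem norm_eq_one_of_mem_commutator {x : Sˣ} (hx : x ∈ commutator Sˣ) :
    norm R (x : S) = 1 :=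
  congrArg Units.val <|
    Abelianization.commutator_subset_ker (Units.map (norm R : S →* R)) hx

theorem pow_finrank_eq_one_of_algebraMap_mem_commutator [Module.Free R S] {r : R} {x : Sˣ}
    (hx : x ∈ commutator Sˣ) (hr : algebraMap R S r = x) :
    r ^ Module.finrank R S = 1 := by
  rw [← Algebra.norm_algebraMap (S := S), hr, norm_eq_one_of_mem_commutator hx]

end Algebra

theorem stmt_7_general (L : Type*) [DivisionRing L]
    (n : ℕ) (hn : Module.finrank (Subring.center L) L = n)
    (x : Lˣ) (hxc : (x : L) ∈ Subring.center L) (hx : x ∈ commutator Lˣ) :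
    x ^ n = 1 := by
  have hpow : (⟨x, hxc⟩ : Subring.center L) ^ n = 1 :=
    hn ▸ Algebra.pow_finrank_eq_one_of_algebraMap_mem_commutator hx rfl
  ext
  simpa using congrArg Subtype.val hpow

/-- Let `L` be a division ring with `[L : Z(L)] = n < ∞`. If `x ∈ Z(L)` is a product of
multiplicative commutators in `L*`, then `xⁿ = 1`. -/
theorem stmt_7 (L : Type*) [DivisionRing L] [Module.Finite (Subring.center L) L]
    (n : ℕ) (hn : Module.finrank (Subring.center L) L = n)
    (x : Lˣ) (hxc : (x : L) ∈ Subring.center L) (hx : x ∈ commutator Lˣ) :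
    x ^ n = 1 :=
  stmt_7_general L n hn x hxc hx
end

section
/- Let D be a division ring, K a proper division subring, and N a normal subgroup of D* radical over K. If a ∈ K ∩ N, b ∈ N \ K, and a ≠ 1, a ≠ −1, b ≠ ±1, a + b ≠ 0, then there exists a positive integer m such that aᵐ b = b aᵐ. -/
/-! Conjugate `a` by `a + b` and by `b + 1`: both conjugates `x, y` lie in `N`, so for a common
`m > 0` both `xᵐ` and `yᵐ` lie in `K`. Comparing `xᵐ (a + b) = (a + b) aᵐ` with
`yᵐ (b + 1) = (b + 1) aᵐ` gives `(xᵐ - yᵐ) b = aᵐ (a - 1) + yᵐ - xᵐ a`, whose right-hand side lies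
in `K`. As `b ∉ K` this forces `xᵐ = yᵐ`, then `(aᵐ - xᵐ)(a - 1) = 0`, so `xᵐ = aᵐ`, and the second
relation says that `aᵐ` commutes with `b + 1`, hence with `b`. -/

section DivisionRing

variable {D S : Type*} [DivisionRing D] [SetLike S D] [SubfieldClass S D] {K : S}

theorem commute_of_mul_add_eq_of_mem {a b p x y : D} (ha : a ∈ K) (hb : b ∉ K) (ha1 : a ≠ 1)
    (hp : p ∈ K) (hap : Commute a p) (hx : x ∈ K) (hy : y ∈ K)
    (hxp : x * (a + b) = (a + b) * p) (hyp : y * (b + 1) = (b + 1) * p) :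
    Commute p b := by
  have key : (x - y) * b = p * (a - 1) + y - x * a := by
    linear_combination (norm := noncomm_ring) hxp - hyp + hap.eq
  have hxy : x = y := by
    by_contra hne
    refine hb ?_
    have hb_eq : b = (x - y)⁻¹ * (p * (a - 1) + y - x * a) := by
      rw [← key, ← mul_assoc, inv_mul_cancel₀ (sub_ne_zero_of_ne hne), one_mul]
    rw [hb_eq]
    exact mul_mem (inv_mem (sub_mem hx hy))
      (sub_mem (add_mem (mul_mem hp (sub_mem ha (one_mem K))) hy) (mul_mem hx ha))
  subst hxy
  have hxp' : x = p := by
    have h0 : (p - x) * (a - 1) = 0 := by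
      linear_combination (norm := noncomm_ring) -key
    rcases mul_eq_zero.mp h0 with h | h
    · exact (sub_eq_zero.mp h).symm
    · exact absurd (sub_eq_zero.mp h) ha1
  subst hxp'
  simpa using (show Commute x (b + 1) from hyp).sub_right (Commute.one_right x)

end DivisionRing

theorem Units.val_conj_pow_mul {M : Type*} [Monoid M] (u a : Mˣ) (n : ℕ) :
    ((u * a * u⁻¹ : Mˣ) : M) ^ n * u = u * (a : M) ^ n := by
  rw [← Units.val_pow_eq_pow_val, _root_.conj_pow]
  simp

theorem stmt_11_general (D : Type*) [DivisionRing D] (K : Subfield D)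
    (N : Subgroup Dˣ) (hNnormal : N.Normal)
    (hrad : ∀ x ∈ N, ∃ n : ℕ, 0 < n ∧ ((x : Dˣ) : D) ^ n ∈ K)
    (a b : Dˣ) (haN : a ∈ N)
    (haK : (a : D) ∈ K) (hbK : (b : D) ∉ K)
    (ha1 : (a : D) ≠ 1)
    (hb1' : (b : D) ≠ -1)
    (hab : (a : D) + (b : D) ≠ 0) :
    ∃ m : ℕ, 0 < m ∧ (a : D) ^ m * (b : D) = (b : D) * (a : D) ^ m := by
  let u : Dˣ := Units.mk0 ((a : D) + b) hab
  let v : Dˣ := Units.mk0 ((b : D) + 1) fun h => hb1' (eq_neg_of_add_eq_zero_left h)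
  obtain ⟨n₁, hn₁, hxK⟩ := hrad _ (hNnormal.conj_mem a haN u)
  obtain ⟨n₂, hn₂, hyK⟩ := hrad _ (hNnormal.conj_mem a haN v)
  refine ⟨n₁ * n₂, Nat.mul_pos hn₁ hn₂, ?_⟩
  refine commute_of_mul_add_eq_of_mem haK hbK ha1 (pow_mem haK _) (Commute.self_pow _ _)
    (x := ((u * a * u⁻¹ : Dˣ) : D) ^ (n₁ * n₂)) (y := ((v * a * v⁻¹ : Dˣ) : D) ^ (n₁ * n₂))
    ?_ ?_ ?_ ?_
  · rw [pow_mul]; exact pow_mem hxK n₂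
  · rw [mul_comm, pow_mul]; exact pow_mem hyK n₁
  · exact Units.val_conj_pow_mul u a _
  · exact Units.val_conj_pow_mul v a _

/-- Let `K` be a proper division subring of a division ring `D` and `N` a normal
subgroup of `D*` radical over `K`. If `a ∈ K ∩ N`, `b ∈ N \ K`, `a ≠ ±1`, `b ≠ ±1`
and `a + b ≠ 0`, then some positive power of `a` commutes with `b`. -/
theorem stmt_11 (D : Type*) [DivisionRing D] (K : Subfield D) (hK : K ≠ ⊤)
    (N : Subgroup Dˣ) (hNnormal : N.Normal)
    (hrad : ∀ x ∈ N, ∃ n : ℕ, 0 < n ∧ ((x : Dˣ) : D) ^ n ∈ K)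
    (a b : Dˣ) (haN : a ∈ N) (hbN : b ∈ N)
    (haK : (a : D) ∈ K) (hbK : (b : D) ∉ K)
    (ha1 : (a : D) ≠ 1) (ha1' : (a : D) ≠ -1)
    (hb1 : (b : D) ≠ 1) (hb1' : (b : D) ≠ -1)
    (hab : (a : D) + (b : D) ≠ 0) :
    ∃ m : ℕ, 0 < m ∧ (a : D) ^ m * (b : D) = (b : D) * (a : D) ^ m :=
  stmt_11_general D K N hNnormal hrad a b haN haK hbK ha1 hb1' hab
end

section
/- Let D be a non-commutative division ring of characteristic 0 that is weakly locally finite, with center F. Then no subgroup N of GL_n(D) containing the scalar matrices F*·I is finitely generated. (Characteristic 0 case: ℚ* embeds, modulo a finite torsion subgroup, into the finitely generated abelian group F*N'/N', contradiction since ℚ* is not finitely generated.) -/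
/-!
Rational scalar matrices give a homomorphism `ℚˣ → N → Nᵃᵇ`. If `q • 1` is a product of
commutators in `GL_n(D)`, it is already one in `GL_n(K)` for the division subring `K` generated by
the finitely many entries involved. `K` is finite-dimensional over its centre `Z`, and the norm
`M_n(K) → Z` kills commutators while sending `q • 1` to `q ^ [M_n(K) : Z]`; so `q = ±1`. Thus
`ℚˣ → Nᵃᵇ` has finite kernel, and if `N` were finitely generated, so would be the abelian group
`Nᵃᵇ`, hence `ℚˣ`. But a finite set of rationals has `p`-adic valuation zero for every large
prime `p`, so it cannot generate `ℚˣ`.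
-/

theorem padicValRat_eq_zero_of_lt {p : ℕ} {q : ℚ} (hq : q ≠ 0) (hnum : q.num.natAbs < p)
    (hden : q.den < p) : padicValRat p q = 0 := by
  have hnum' : ¬ p ∣ q.num.natAbs := fun h =>
    (Nat.le_of_dvd (Int.natAbs_pos.mpr (Rat.num_ne_zero.mpr hq)) h).not_gt hnum
  have hden' : ¬ p ∣ q.den := fun h => (Nat.le_of_dvd q.den_pos h).not_gt hden
  rw [padicValRat_def, padicValInt, padicValNat.eq_zero_of_not_dvd hnum',
    padicValNat.eq_zero_of_not_dvd hden', sub_self]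

def Rat.padicValUnits (p : ℕ) [Fact p.Prime] : ℚˣ →* Multiplicative ℤ where
  toFun q := .ofAdd (padicValRat p q)
  map_one' := by simp
  map_mul' a b := by simp [padicValRat.mul a.ne_zero b.ne_zero]

theorem Rat.not_fg_units : ¬ Group.FG ℚˣ := by
  rintro ⟨S, hS⟩
  let height : ℚˣ → ℕ := fun q => (q : ℚ).num.natAbs ⊔ (q : ℚ).den
  obtain ⟨p, hpS, hp⟩ := Nat.exists_infinite_primes (S.sup height + 1)
  have : Fact p.Prime := ⟨hp⟩
  have hSker : (S : Set ℚˣ) ⊆ (Rat.padicValUnits p).ker := fun q hq => by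
    have hq : height q < p := Nat.lt_of_lt_of_le (Nat.lt_succ_of_le (Finset.le_sup hq)) hpS
    simp [Rat.padicValUnits, padicValRat_eq_zero_of_lt q.ne_zero
      (le_sup_left.trans_lt hq) (le_sup_right.trans_lt hq)]
  have hp1 : Units.mk0 (p : ℚ) (by exact_mod_cast hp.ne_zero) ∈ (Rat.padicValUnits p).ker :=
    (Subgroup.closure_le _).mpr hSker (hS ▸ Subgroup.mem_top _)
  simp [Rat.padicValUnits, padicValRat.self hp.one_lt] at hp1

theorem Group.fg_of_finite_ker {G A : Type*} [CommGroup G] [CommGroup A] [Group.FG A]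
    (f : G →* A) (hf : (f.ker : Set G).Finite) : Group.FG G := by
  rw [GroupFG.iff_add_fg, ← Module.Finite.iff_addGroup_fg, Module.finite_def]
  refine Submodule.fg_of_fg_map_of_fg_inf_ker f.toAdditive.toIntLinearMap
    (IsNoetherian.noetherian _) ?_
  rw [top_inf_eq, AddMonoidHom.coe_toIntLinearMap_ker, MonoidHom.coe_toAdditive_ker,
    Submodule.fg_iff_addSubgroup_fg, AddSubgroup.toIntSubmodule_toAddSubgroup,
    ← AddGroup.fg_iff_addSubgroup_fg]
  have : Finite (Subgroup.toAddSubgroup f.ker) := hf.to_subtype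
  exact AddGroup.fg_of_finite

theorem Subgroup.exists_mem_commutator_of_directed {G ι : Type*} [Group G] [Nonempty ι]
    {H : ι → Subgroup G} (hH : Directed (· ≤ ·) H) (hcover : ∀ g, ∃ i, g ∈ H i) {z : G}
    (hz : z ∈ _root_.commutator G) : ∃ i, z ∈ ⁅H i, H i⁆ := by
  have hdir : Directed (· ≤ ·) fun i => ⁅H i, H i⁆ :=
    hH.mono_comp (· ≤ ·) fun _ _ h => Subgroup.commutator_mono h h
  refine (Subgroup.mem_iSup_of_directed hdir).mp ?_
  refine (_root_.commutator_def G ▸ Subgroup.commutator_le).mpr (fun a _ b _ => ?_) hz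
  obtain ⟨i, ha⟩ := hcover a
  obtain ⟨j, hb⟩ := hcover b
  obtain ⟨k, hik, hjk⟩ := hH i j
  exact Subgroup.mem_iSup_of_mem k (Subgroup.commutator_mem_commutator (hik ha) (hjk hb))

theorem pow_finrank_eq_one_of_algebraMap_mem_commutator {R A : Type*} [CommRing R] [Ring A]
    [Algebra R A] [Module.Free R A] {u : Aˣ} (hu : u ∈ commutator Aˣ) {r : R}
    (hr : (u : A) = algebraMap R A r) : r ^ Module.finrank R A = 1 := by
  have h1 : Units.map (Algebra.norm R : A →* R) u = 1 := Abelianization.commutator_subset_ker _ hu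
  rw [← Algebra.norm_algebraMap, ← hr]
  simpa using congrArg Units.val h1

namespace Subfield

variable {D : Type*} [DivisionRing D] {n : Type*} [Fintype n] [DecidableEq n]

def unitsMatrixMap (K : Subfield D) : (Matrix n n K)ˣ →* (Matrix n n D)ˣ :=
  Units.map (RingHom.mapMatrix (m := n) K.subtype).toMonoidHom

@[simp]
theorem coe_unitsMatrixMap_apply (K : Subfield D) (w : (Matrix n n K)ˣ) (i j : n) :
    (K.unitsMatrixMap w : Matrix n n D) i j = ((w : Matrix n n K) i j : D) :=
  rfl

theorem range_unitsMatrixMap_mono {K L : Subfield D} (h : K ≤ L) :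
    (K.unitsMatrixMap (n := n)).range ≤ L.unitsMatrixMap.range := by
  rintro _ ⟨w, rfl⟩
  exact ⟨Units.map (RingHom.mapMatrix (m := n) (Subfield.inclusion h)).toMonoidHom w, rfl⟩

theorem mem_range_unitsMatrixMap_of_entries_mem {K : Subfield D} {g : (Matrix n n D)ˣ}
    (hg : ∀ i j, (g : Matrix n n D) i j ∈ K) (hginv : ∀ i j, (↑g⁻¹ : Matrix n n D) i j ∈ K) :
    g ∈ (K.unitsMatrixMap (n := n)).range := by
  have hinj : Function.Injective (RingHom.mapMatrix (m := n) K.subtype) :=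
    Matrix.map_injective Subtype.val_injective
  refine ⟨⟨Matrix.of fun i j => ⟨_, hg i j⟩, Matrix.of fun i j => ⟨_, hginv i j⟩,
    hinj ?_, hinj ?_⟩, rfl⟩
  · rw [map_mul, map_one]; exact g.mul_inv
  · rw [map_mul, map_one]; exact g.inv_mul

theorem exists_finset_mem_range_unitsMatrixMap (g : (Matrix n n D)ˣ) :
    ∃ S : Finset D, g ∈ (closure (S : Set D)).unitsMatrixMap.range := by
  classical
  refine ⟨Finset.univ.image (fun p : n × n => (g : Matrix n n D) p.1 p.2) ∪
    Finset.univ.image (fun p : n × n => (↑g⁻¹ : Matrix n n D) p.1 p.2),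
    mem_range_unitsMatrixMap_of_entries_mem (fun i j => subset_closure ?_)
      (fun i j => subset_closure ?_)⟩
  · exact Finset.mem_union_left _ (Finset.mem_image_of_mem _ (Finset.mem_univ (i, j)))
  · exact Finset.mem_union_right _ (Finset.mem_image_of_mem _ (Finset.mem_univ (i, j)))

end Subfield

theorem IsWeaklyLocallyFinite.exists_pow_eq_one_of_smul_one_mem_commutator {D : Type*}
    [DivisionRing D] (hD : IsWeaklyLocallyFinite D) {n : Type*} [Fintype n] [DecidableEq n]
    [Nonempty n] {d : D} (hd : d ∈ Subring.center D) {z : (Matrix n n D)ˣ}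
    (hz : (z : Matrix n n D) = d • 1) (hzc : z ∈ commutator (Matrix n n D)ˣ) :
    ∃ m, 0 < m ∧ d ^ m = 1 := by
  obtain ⟨S, hS⟩ := Subgroup.exists_mem_commutator_of_directed
    (H := fun S : Finset D => (Subfield.closure (S : Set D)).unitsMatrixMap.range)
    (Monotone.directed_le fun _ _ h => Subfield.range_unitsMatrixMap_mono
      (Subfield.closure_mono (Finset.coe_subset.mpr h)))
    Subfield.exists_finset_mem_range_unitsMatrixMap hzc
  set K := Subfield.closure (S : Set D)
  have : Module.Finite (Subring.center K) K := hD S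
  rw [MonoidHom.range_eq_map, ← Subgroup.map_commutator, ← commutator_def] at hS
  obtain ⟨w, hw, rfl⟩ := hS
  obtain ⟨i⟩ := ‹Nonempty n›
  have hdK : d ∈ K := by
    have hii : ((w : Matrix n n K) i i : D) = d := by
      simpa using congrFun (congrFun hz i) i
    exact hii ▸ ((w : Matrix n n K) i i).2
  let c : Subring.center K := ⟨⟨d, hdK⟩, Subring.mem_center_iff.mpr fun x =>
    Subtype.ext (Subring.mem_center_iff.mp hd x)⟩
  have hc : algebraMap (Subring.center K) K c = ⟨d, hdK⟩ := rfl
  have hwc : (w : Matrix n n K) = algebraMap (Subring.center K) _ c := by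
    refine Matrix.map_injective Subtype.val_injective (hz.trans ?_)
    ext a b
    by_cases hab : a = b <;> simp [Matrix.algebraMap_matrix_apply, hab, hc]
  refine ⟨Module.finrank (Subring.center K) (Matrix n n K), Module.finrank_pos, ?_⟩
  simpa [c] using congrArg (fun x : Subring.center K => ((x : K) : D))
    (pow_finrank_eq_one_of_algebraMap_mem_commutator hw hwc)

theorem ratCast_mem_center {D : Type*} [DivisionRing D] (q : ℚ) : (q : D) ∈ Subring.center D :=
  Subring.mem_center_iff.mpr fun g => (Rat.cast_commute q g).eq.symm

section RatScalars

variable (D : Type*) [DivisionRing D] [CharZero D] (n : Type*) [Fintype n] [DecidableEq n]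

def ratScalarUnits : ℚˣ →* (Matrix n n D)ˣ :=
  Units.map ((Matrix.scalar n).comp (Rat.castHom D)).toMonoidHom

theorem coe_ratScalarUnits (q : ℚˣ) :
    (ratScalarUnits D n q : Matrix n n D) = ((q : ℚ) : D) • 1 := by
  simp [ratScalarUnits, Matrix.smul_one_eq_diagonal]

end RatScalars

theorem IsWeaklyLocallyFinite.eq_one_or_eq_neg_one_of_ratScalarUnits_mem_commutator {D : Type*}
    [DivisionRing D] [CharZero D] (hD : IsWeaklyLocallyFinite D) {n : Type*} [Fintype n]
    [DecidableEq n] [Nonempty n] {q : ℚˣ}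
    (hq : ratScalarUnits D n q ∈ commutator (Matrix n n D)ˣ) : q = 1 ∨ q = -1 := by
  obtain ⟨m, hm, hpow⟩ := hD.exists_pow_eq_one_of_smul_one_mem_commutator
    (ratCast_mem_center q) (coe_ratScalarUnits D n q) hq
  have hqm : (q : ℚ) ^ m = 1 := by exact_mod_cast hpow
  rcases (pow_eq_one_iff_of_ne_zero hm.ne').mp hqm with h | ⟨h, -⟩
  · exact Or.inl (Units.ext h)
  · exact Or.inr (Units.ext h)

theorem Subgroup.coe_mem_commutator_of_abelianization_of_eq_one {G : Type*} [Group G]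
    {N : Subgroup G} {x : N} (hx : Abelianization.of x = 1) : (x : G) ∈ _root_.commutator G := by
  rw [← Abelianization.ker_of, MonoidHom.mem_ker, ← N.subtype_apply, ← Abelianization.map_of, hx,
    map_one]

theorem stmt_16_general (D : Type*) [DivisionRing D] [CharZero D]
    (hD : IsWeaklyLocallyFinite D)
    (n : ℕ) (hn : 0 < n)
    (N : Subgroup (Matrix (Fin n) (Fin n) D)ˣ)
    (hscalar : ∀ d : Dˣ, (d : D) ∈ Subring.center D →
      ∃ A ∈ N, (A : (Matrix (Fin n) (Fin n) D)ˣ).val =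
        (d : D) • (1 : Matrix (Fin n) (Fin n) D)) :
    ¬ N.FG := by
  intro hN
  have : Group.FG N := (Group.fg_iff_subgroup_fg N).mpr hN
  have : Group.FG (Abelianization N) := inferInstanceAs (Group.FG (N ⧸ commutator N))
  have : Nonempty (Fin n) := ⟨⟨0, hn⟩⟩
  have hmem (q : ℚˣ) : ratScalarUnits D (Fin n) q ∈ N := by
    obtain ⟨A, hA, hAq⟩ := hscalar (Units.map (Rat.castHom D) q) (ratCast_mem_center q)
    convert hA
    exact Units.ext ((coe_ratScalarUnits D (Fin n) q).trans hAq.symm)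
  let f : ℚˣ →* Abelianization N :=
    Abelianization.of.comp ((ratScalarUnits D (Fin n)).codRestrict N hmem)
  have hker : (f.ker : Set ℚˣ) ⊆ {1, -1} := fun q hq =>
    hD.eq_one_or_eq_neg_one_of_ratScalarUnits_mem_commutator
      (Subgroup.coe_mem_commutator_of_abelianization_of_eq_one hq)
  exact Rat.not_fg_units (Group.fg_of_finite_ker f ((Set.toFinite _).subset hker))

/-- Let `D` be a non-commutative weakly locally finite division ring of
characteristic 0 with center `F`. Then no subgroup `N` of `GL_n(D)` containing
all scalar matrices `d • I` with `d ∈ F*` is finitely generated. -/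
theorem stmt_16 (D : Type*) [DivisionRing D] [CharZero D]
    (hD : IsWeaklyLocallyFinite D) (hnc : ¬ ∀ a b : D, a * b = b * a)
    (n : ℕ) (hn : 0 < n)
    (N : Subgroup (Matrix (Fin n) (Fin n) D)ˣ)
    (hscalar : ∀ d : Dˣ, (d : D) ∈ Subring.center D →
      ∃ A ∈ N, (A : (Matrix (Fin n) (Fin n) D)ˣ).val =
        (d : D) • (1 : Matrix (Fin n) (Fin n) D)) :
    ¬ N.FG :=
  stmt_16_general D hD n hn N hscalar
end

section
/- Let D be a non-commutative division ring that is algebraic over its center and weakly locally finite. Then the multiplicative group D* is not finitely generated. -/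
instance : IsJacobsonRing ℤ := by
  rw [isJacobsonRing_iff_prime_eq]
  intro P hP
  rcases eq_or_ne P ⊥ with rfl | hne
  · refine le_antisymm (fun x hx => ?_) Ideal.le_jacobson
    by_contra hx0
    obtain ⟨p, hple, hp⟩ := Nat.exists_infinite_primes (x.natAbs + 1)
    have hmax : Ideal.IsMaximal (Ideal.span {(p : ℤ)}) :=
      PrincipalIdealRing.isMaximal_of_irreducible
        (Int.prime_iff_natAbs_prime.2 (by simpa using hp)).irreducible
    have hx' : x ∈ Ideal.span {(p : ℤ)} := Ideal.mem_sInf.1 hx ⟨bot_le, hmax⟩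
    rw [Ideal.mem_span_singleton] at hx'
    have h2 := Int.natAbs_dvd_natAbs.2 hx'
    simp only [Int.natAbs_natCast] at h2
    have := Nat.le_of_dvd (by simpa [Int.natAbs_eq_zero] using hx0) h2
    omega
  · haveI := hP
    haveI := IsPrime.to_maximal_ideal hne
    exact Ideal.jacobson_eq_self_of_isMaximal

theorem aux_field_finite (F : Type*) [Field F] (n : ℕ) (hn : n ≠ 0)
    (T : Finset Fˣ) (hpow : ∀ c : Fˣ, c ^ n ∈ Subgroup.closure (T : Set Fˣ)) :
    Finite F := by
  classical
  haveI : NeZero n := ⟨hn⟩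
  set s : Finset F := T.image (fun u : Fˣ => (u : F)) ∪ T.image (fun u : Fˣ => ((u⁻¹ : Fˣ) : F))
    with hs
  set R₀ : Subalgebra ℤ F := Algebra.adjoin ℤ (s : Set F) with hR₀
  -- closure of T lands inside R₀
  have hTR : ∀ u ∈ Subgroup.closure (T : Set Fˣ), ((u : Fˣ) : F) ∈ R₀ ∧ ((u⁻¹ : Fˣ) : F) ∈ R₀ := by
    intro u hu
    induction hu using Subgroup.closure_induction with
    | mem v hv =>
        constructor
        · exact Algebra.subset_adjoin (by
            simp only [hs, Finset.coe_union, Set.mem_union, Finset.coe_image, Set.mem_image]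
            exact Or.inl ⟨v, hv, rfl⟩)
        · exact Algebra.subset_adjoin (by
            simp only [hs, Finset.coe_union, Set.mem_union, Finset.coe_image, Set.mem_image]
            exact Or.inr ⟨v, hv, rfl⟩)
    | one => exact ⟨by simpa using R₀.one_mem, by simpa using R₀.one_mem⟩
    | mul a b _ _ ha hb => exact ⟨by simpa using R₀.mul_mem ha.1 hb.1,
        by simpa [mul_comm] using R₀.mul_mem hb.2 ha.2⟩
    | inv a _ ha => exact ⟨by simpa using ha.2, by simpa using ha.1⟩
  have key : ∀ c : Fˣ, ((c : F)) ^ n ∈ R₀ := by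
    intro c
    have := (hTR _ (hpow c)).1
    simpa [Units.val_pow_eq_pow_val] using this
  -- F is integral over R₀
  haveI hint : Algebra.IsIntegral R₀ F := by
    constructor
    intro x
    rcases eq_or_ne x 0 with rfl | hx
    · exact isIntegral_zero
    · refine ⟨Polynomial.X ^ n - Polynomial.C ⟨x ^ n, by simpa using key (Units.mk0 x hx)⟩,
        Polynomial.monic_X_pow_sub_C _ hn, ?_⟩
      simp [Polynomial.eval₂_sub, Subalgebra.algebraMap_eq]
  have hfield : IsField R₀ := by
    refine isField_of_isIntegral_of_isField (R := R₀) (S := F) ?_ (Field.toIsField F)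
    rw [Subalgebra.algebraMap_eq]
    exact Subtype.val_injective
  letI : Field R₀ := hfield.toField
  haveI : Algebra.FiniteType ℤ R₀ := (Subalgebra.fg_iff_finiteType R₀).1 (Subalgebra.fg_adjoin_finset s)
  haveI : Module.Finite ℤ R₀ := finite_of_finite_type_of_isJacobsonRing ℤ R₀
  -- R₀ is finite
  have hR₀fin : Finite R₀ := by
    rcases CharP.char_is_prime_or_zero R₀ (ringChar R₀) with hp | h0
    · have htor : AddMonoid.IsTorsion R₀ := by
        intro x
        refine isOfFinAddOrder_iff_nsmul_eq_zero.2 ⟨ringChar R₀, hp.pos, ?_⟩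
        haveI : CharP R₀ (ringChar R₀) := ringChar.charP R₀
        simp [nsmul_eq_mul, CharP.cast_eq_zero]
      haveI : AddGroup.FG R₀ := Module.Finite.iff_addGroup_fg.mp ‹Module.Finite ℤ R₀›
      exact AddCommGroup.finite_of_fg_torsion R₀ htor
    · exfalso
      haveI : CharP R₀ 0 := h0 ▸ ringChar.charP R₀
      haveI : CharZero R₀ := CharP.charP_to_charZero R₀
      haveI : Algebra.IsIntegral ℤ R₀ := Algebra.IsIntegral.of_finite ℤ R₀
      have hint2 : IsIntegral ℤ ((2⁻¹ : ℚ) : ℚ) := by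
        obtain ⟨p, pmonic, hp⟩ := Algebra.IsIntegral.isIntegral (R := ℤ) (((2⁻¹ : ℚ) : R₀) : R₀)
        refine ⟨p, pmonic, ?_⟩
        apply Rat.cast_injective (α := R₀)
        have hcomp : (Rat.castHom R₀).comp (algebraMap ℤ ℚ) = algebraMap ℤ R₀ :=
          RingHom.ext_int _ _
        have := Polynomial.hom_eval₂ p (algebraMap ℤ ℚ) (Rat.castHom R₀) (2⁻¹ : ℚ)
        rw [Rat.cast_zero]
        show (Rat.castHom R₀) _ = 0
        rw [this, hcomp]
        simpa using hp
      obtain ⟨k, hk⟩ := IsIntegrallyClosed.isIntegral_iff.mp hint2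
      have hk' : (k : ℚ) = 2⁻¹ := by rw [← hk]; simp
      have h2 : ((2 * k : ℤ) : ℚ) = ((1 : ℤ) : ℚ) := by push_cast; rw [hk']; norm_num
      have := Int.cast_injective (α := ℚ) h2
      omega
  -- now conclude that F is finite
  have hφker : Finite ((powMonoidHom n : Fˣ →* Fˣ).ker) := by
    have : ((powMonoidHom n : Fˣ →* Fˣ).ker) = rootsOfUnity n F := by
      ext x; simp [MonoidHom.mem_ker, mem_rootsOfUnity]
    rw [this]; infer_instance
  have hφrange : Finite ((powMonoidHom n : Fˣ →* Fˣ).range) := by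
    have hinj : Function.Injective
        (fun y : (powMonoidHom n : Fˣ →* Fˣ).range => ((y : Fˣ) : F)) := by
      intro a b h
      exact Subtype.ext (Units.ext h)
    refine Finite.of_injective (fun y : (powMonoidHom n : Fˣ →* Fˣ).range =>
      (⟨((y : Fˣ) : F), ?_⟩ : R₀)) (fun a b h => hinj (congrArg Subtype.val h))
    obtain ⟨c, hc⟩ := y.2
    have : ((y : Fˣ) : F) = ((c : F)) ^ n := by
      rw [← hc]; simp [powMonoidHom, Units.val_pow_eq_pow_val]
    rw [this]
    exact key c
  have hFx : Finite Fˣ := by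
    have e1 := Subgroup.groupEquivQuotientProdSubgroup (s := (powMonoidHom n : Fˣ →* Fˣ).ker)
    have e2 := QuotientGroup.quotientKerEquivRange (powMonoidHom n : Fˣ →* Fˣ)
    haveI : Finite (Fˣ ⧸ (powMonoidHom n : Fˣ →* Fˣ).ker) := Finite.of_equiv _ e2.symm.toEquiv
    exact Finite.of_equiv _ e1.symm
  have : (Set.univ : Set F) ⊆ insert 0 (Set.range (fun u : Fˣ => (u : F))) := by
    intro x _
    rcases eq_or_ne x 0 with rfl | hx
    · exact Set.mem_insert _ _
    · exact Set.mem_insert_of_mem _ ⟨Units.mk0 x hx, rfl⟩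
  exact Set.finite_univ_iff.mp (((Set.finite_range _).insert 0).subset this)

set_option maxHeartbeats 1000000 in
noncomputable def myNormHom (K : Type*) [DivisionRing K] : K →* (Subring.center K) where
  toFun := fun x => LinearMap.det (LinearMap.mulLeft (Subring.center K) x)
  map_one' := by
    show LinearMap.det (LinearMap.mulLeft (Subring.center K) (1:K)) = 1
    rw [LinearMap.mulLeft_one]; exact LinearMap.det_id
  map_mul' := fun a b => by
    show LinearMap.det (LinearMap.mulLeft (Subring.center K) (a*b)) = _
    rw [LinearMap.mulLeft_mul]; exact LinearMap.det_comp _ _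

set_option maxHeartbeats 1000000 in
theorem aux_comm (K : Type*) [DivisionRing K]
    (hfin : Module.Finite (Subring.center K) K) (hfg : Group.FG Kˣ) :
    ∀ a b : K, a * b = b * a := by
  classical
  set F := Subring.center K with hF
  set n := Module.finrank F K with hn
  have hn0 : n ≠ 0 := by
    have : 0 < n := Module.finrank_pos
    omega
  -- the norm of a central element is its n-th power
  have hcen : ∀ c : F, myNormHom K (c : K) = c ^ n := by
    intro c
    have hml : LinearMap.mulLeft F ((c : K)) = c • (LinearMap.id : K →ₗ[F] K) := by
      ext x
      simp [LinearMap.mulLeft_apply, Subring.smul_def]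
    show LinearMap.det (LinearMap.mulLeft F ((c : K))) = c ^ n
    rw [hml, LinearMap.det_smul, LinearMap.det_id, mul_one]
  -- generators
  obtain ⟨S, hSc, hSf⟩ := Group.fg_iff.mp hfg
  set f : Kˣ →* Fˣ := Units.map (myNormHom K) with hf
  set T : Finset Fˣ := hSf.toFinset.image f with hT
  have hpow : ∀ c : Fˣ, c ^ n ∈ Subgroup.closure (T : Set Fˣ) := by
    intro c
    have h1 : Subgroup.closure (T : Set Fˣ) = Subgroup.map f ⊤ := by
      have hTS : (T : Set (↥F)ˣ) = ⇑f '' S := by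
        simp [hT, Finset.coe_image, Set.Finite.coe_toFinset]
      rw [hTS, ← MonoidHom.map_closure, hSc]
    rw [h1]
    refine ⟨Units.map ((Subring.center K).subtype.toMonoidHom) c, trivial, ?_⟩
    refine Units.ext ?_
    calc ((f (Units.map ((Subring.center K).subtype.toMonoidHom) c) : (↥F)ˣ) : ↥F)
        = myNormHom K (((c : ↥F) : K)) := rfl
      _ = (c : ↥F) ^ n := hcen _
      _ = ((c ^ n : (↥F)ˣ) : ↥F) := (Units.val_pow_eq_pow_val c n).symm
  have : Finite F := aux_field_finite F n hn0 T hpow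
  have : Finite K := Module.finite_of_finite F
  letI : Field K := littleWedderburn K
  exact fun a b => mul_comm a b

/-- Let `D` be a non-commutative division ring, algebraic over its center and
weakly locally finite. Then `D*` is not finitely generated. -/
theorem stmt_19 (D : Type*) [DivisionRing D]
    (hD : IsWeaklyLocallyFinite D) (hnc : ¬ ∀ a b : D, a * b = b * a)
    (halg : ∀ x : D, ∃ p : Polynomial (Subring.center D),
      p ≠ 0 ∧ (p.map (Subring.center D).subtype).eval x = 0) :
    ¬ Group.FG Dˣ := by
  classical
  intro hFG
  obtain ⟨S, hSc, hSf⟩ := Group.fg_iff.mp hFG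
  set S' : Finset D := hSf.toFinset.image (fun u : Dˣ => (u : D)) with hS'
  have hclo : Subfield.closure (S' : Set D) = ⊤ := by
    rw [eq_top_iff]
    intro x _
    rcases eq_or_ne x 0 with rfl | hx
    · exact Subfield.zero_mem _
    · have hall : ∀ u : Dˣ, (u : D) ∈ Subfield.closure (S' : Set D) := by
        let H : Subgroup Dˣ :=
          { carrier := {u : Dˣ | (u : D) ∈ Subfield.closure (S' : Set D)}
            one_mem' := by simpa using Subfield.one_mem _
            mul_mem' := fun {a b} ha hb => by
              simpa using Subfield.mul_mem _ ha hb
            inv_mem' := fun {a} ha => by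
              simpa using (Subfield.closure (S' : Set D)).inv_mem ha }
        have hle : Subgroup.closure S ≤ H := by
          rw [Subgroup.closure_le]
          intro u hu
          refine Subfield.subset_closure ?_
          simp only [hS', Finset.coe_image, Set.Finite.coe_toFinset, Set.mem_image]
          exact ⟨u, hu, rfl⟩
        intro u
        have : u ∈ Subgroup.closure S := by rw [hSc]; trivial
        exact hle this
      simpa using hall (Units.mk0 x hx)
  have hfin := hD S'
  rw [hclo] at hfin
  have hfg2 : Group.FG (↥(⊤ : Subfield D))ˣ := by
    have e : Dˣ ≃* (↥(⊤ : Subfield D))ˣ :=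
      Units.mapEquiv (Subfield.topEquiv (K := D)).symm.toMulEquiv
    exact Group.fg_of_surjective (f := e.toMonoidHom) e.surjective
  have hcomm := aux_comm ↥(⊤ : Subfield D) hfin hfg2
  apply hnc
  intro a b
  have h := hcomm ⟨a, trivial⟩ ⟨b, trivial⟩
  exact congrArg Subtype.val h
end
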